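/- Fine-scale per-depth threshold lower bound on the ordered grid: let m ≥ 2 and T ≥ m be integers, define grid points x_i := 1/4 + (i-1)/(2(m-1)) for i ∈ {1,...,m}, contexts x^{ctx}_t := x_{1+((t-1) mod m)} for t ∈ {1,...,T}, and means μ_t := x^{ctx}_t. Let w be a real with 0 < w < 1/(4(m-1)), and let Ḡ be ANY finite family of functions from [0,1] to {0,1}. Suppose {S_1,...,S_J} is a partition of {1,...,T} into nonempty contiguous blocks and for each block S there is a score f_S : [0,1] → [0,1] that is (K_S, B_S, 1/4)-threshold representable on S with respect to Ḡ and satisfies |μ_t - f_S(x^{ctx}_t)| ≤ w for all t ∈ S. Then ∑_{S} B_S K_S ≥ (3/4) m. -/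

import Mathlib

/-- A score `f : X → [0,1]` is `(K, B, η)`-threshold representable on a finite index set `S`
with contexts `x : ι → X`, with respect to a finite family `G` of group functions. -/
def ThresholdRep {X : Type*} {ι : Type*} (G : Finset (X → ℝ)) (S : Finset ι) (x : ι → X)
    (f : X → ℝ) (K : ℕ) (B η : ℝ) : Prop :=
  (S.image fun t => f (x t)).card ≤ K ∧
  ∀ r ∈ Set.Icc (0 : ℝ) 1, ∃ α : (X → ℝ) → ℝ,
    (∑ g ∈ G, |α g|) ≤ B ∧
    ∀ t ∈ S,
      (r ≤ f (x t) → 1 - η ≤ ∑ g ∈ G, α g * g (x t)) ∧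
      (f (x t) < r → (∑ g ∈ G, α g * g (x t)) ≤ -(1 - η))

/-- The round-robin ordered-grid context at time `t ∈ {1, ..., T}` for grid size `m`:
`x_i = 1/4 + (i-1)/(2(m-1))` with `i = 1 + ((t-1) mod m)`. -/
noncomputable def gridCtx (m : ℕ) (t : ℕ) : ℝ :=
  1 / 4 + (((t - 1) % m : ℕ) : ℝ) / (2 * ((m : ℝ) - 1))

/-- Distinct grid contexts are separated by at least one grid spacing. -/
lemma grid_sep_aux (m : ℕ) (hm : 2 ≤ m) (s t : ℕ) (hne : gridCtx m s ≠ gridCtx m t) :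
    1 / (2 * ((m : ℝ) - 1)) ≤ |gridCtx m s - gridCtx m t| := by
  have hden : (0:ℝ) < 2 * ((m : ℝ) - 1) := by
    have : (2:ℝ) ≤ (m:ℝ) := by exact_mod_cast hm
    nlinarith
  set a := (s - 1) % m with ha
  set b := (t - 1) % m with hb
  have hab : a ≠ b := by
    intro h; apply hne; unfold gridCtx; rw [← ha, ← hb, h]
  have h1 : (1:ℝ) ≤ |(a:ℝ) - (b:ℝ)| := by
    have h0 : ((a:ℤ) - b) ≠ 0 := by intro h; apply hab; omega
    have := Int.one_le_abs h0
    have h2 : (1:ℝ) ≤ |((a:ℤ) - (b:ℤ) : ℤ)| := by exact_mod_cast this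
    push_cast at h2
    exact h2
  have heq : gridCtx m s - gridCtx m t = ((a:ℝ) - b) / (2 * ((m : ℝ) - 1)) := by
    unfold gridCtx; rw [← ha, ← hb]; ring
  rw [heq, abs_div, abs_of_pos hden, div_le_div_iff₀ hden hden]
  nlinarith

/-- Every point covered by a monotone partition lies in some block. -/
lemma partition_cover_aux (J : ℕ) (τ : ℕ → ℕ) (t : ℕ) (h0 : τ 0 ≤ t) (hJ : t < τ J) :
    ∃ j < J, τ j ≤ t ∧ t < τ (j + 1) := by
  induction J with
  | zero => omega
  | succ n ih =>
    by_cases h : τ n ≤ t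
    · exact ⟨n, Nat.lt_succ_self n, h, hJ⟩
    · obtain ⟨j, hj, h1, h2⟩ := ih (by omega)
      exact ⟨j, by omega, h1, h2⟩

/-- **Fine-scale per-depth threshold lower bound on the ordered grid.** For grid size
`m ≥ 2`, horizon `T ≥ m`, round-robin contexts with means `μ_t = x^{ctx}_t`, and a scale
`0 < w < 1/(4(m-1))`: for ANY finite binary family on `[0,1] ⊆ ℝ`, any partition of
`{1, ..., T}` into nonempty contiguous blocks with, on each block `S`, a
`(K_S, B_S, 1/4)`-threshold-representable score `f_S` approximating the means within `w`,
must satisfy `∑_S B_S K_S ≥ (3/4) m`. -/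
theorem fine_scale_threshold_lower_bound
    (m T : ℕ) (hm : 2 ≤ m) (hT : m ≤ T)
    (w : ℝ) (hw0 : 0 < w) (hw1 : w < 1 / (4 * ((m : ℝ) - 1)))
    (G : Finset (ℝ → ℝ))
    (hG : ∀ g ∈ G, ∀ u : ℝ, g u = 0 ∨ g u = 1)
    (J : ℕ) (hJ : 1 ≤ J) (τ : ℕ → ℕ)
    (hτ0 : τ 0 = 1) (hτJ : τ J = T + 1)
    (hτmono : ∀ j < J, τ j < τ (j + 1))
    (f : ℕ → ℝ → ℝ) (K : ℕ → ℕ) (B : ℕ → ℝ)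
    (hf01 : ∀ j < J, ∀ u : ℝ, f j u ∈ Set.Icc (0 : ℝ) 1)
    (hrep : ∀ j < J,
      ThresholdRep G (Finset.Ico (τ j) (τ (j + 1))) (gridCtx m) (f j) (K j) (B j) (1 / 4))
    (happrox : ∀ j < J, ∀ t ∈ Finset.Ico (τ j) (τ (j + 1)),
      |gridCtx m t - f j (gridCtx m t)| ≤ w) :
    (3 / 4 : ℝ) * m ≤ ∑ j ∈ Finset.range J, B j * K j := by
  have hm2 : (2:ℝ) ≤ (m:ℝ) := by exact_mod_cast hm
  have hden : (0:ℝ) < 2 * ((m:ℝ) - 1) := by nlinarith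
  set c : ℕ → ℕ := fun j => ((Finset.Ico (τ j) (τ (j+1))).image (gridCtx m)).card with hc
  -- Step 1: every block has B j ≥ 3/4
  have hB : ∀ j < J, (3/4 : ℝ) ≤ B j := by
    intro j hj
    obtain ⟨_, hthr⟩ := hrep j hj
    obtain ⟨α, hα, hpt⟩ := hthr 0 (by constructor <;> norm_num)
    have htmem : τ j ∈ Finset.Ico (τ j) (τ (j+1)) := by
      rw [Finset.mem_Ico]; exact ⟨le_refl _, hτmono j hj⟩
    have h1 := (hpt (τ j) htmem).1 ((hf01 j hj _).1)
    have h2 : (∑ g ∈ G, α g * g (gridCtx m (τ j))) ≤ ∑ g ∈ G, |α g| := by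
      calc (∑ g ∈ G, α g * g (gridCtx m (τ j)))
          ≤ |∑ g ∈ G, α g * g (gridCtx m (τ j))| := le_abs_self _
        _ ≤ ∑ g ∈ G, |α g * g (gridCtx m (τ j))| := Finset.abs_sum_le_sum_abs _ _
        _ ≤ ∑ g ∈ G, |α g| := by
            apply Finset.sum_le_sum
            intro g hg
            rw [abs_mul]
            rcases hG g hg (gridCtx m (τ j)) with h | h <;> rw [h] <;>
              simp [abs_nonneg]
    norm_num at h1
    linarith
  -- Step 2: K j is at least the number of distinct grid points in block j
  have hKc : ∀ j < J, c j ≤ K j := by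
    intro j hj
    obtain ⟨hK, _⟩ := hrep j hj
    refine le_trans ?_ hK
    apply Finset.card_le_card_of_injOn (f j)
    · intro x hx
      simp only [Finset.mem_coe, Finset.mem_image] at hx ⊢
      obtain ⟨t, ht, rfl⟩ := hx
      exact ⟨t, ht, rfl⟩
    · intro x hx y hy hfxy
      simp only [Finset.coe_image, Set.mem_image, Finset.mem_coe] at hx hy
      obtain ⟨s, hs, rfl⟩ := hx
      obtain ⟨t, ht, rfl⟩ := hy
      by_contra hne
      have hsep := grid_sep_aux m hm s t hne
      have h1 := happrox j hj s hs
      have h2 := happrox j hj t ht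
      have h3 : |gridCtx m s - gridCtx m t| ≤ 2 * w := by
        calc |gridCtx m s - gridCtx m t|
            = |(gridCtx m s - f j (gridCtx m s)) - (gridCtx m t - f j (gridCtx m t))| := by
              rw [hfxy]; ring_nf
          _ ≤ |gridCtx m s - f j (gridCtx m s)| + |gridCtx m t - f j (gridCtx m t)| :=
              abs_sub _ _
          _ ≤ 2 * w := by linarith
      have h4 : 1 / (2 * ((m:ℝ) - 1)) = 2 * (1 / (4 * ((m:ℝ) - 1))) := by
        rw [mul_one_div, div_eq_div_iff (ne_of_gt hden) (by nlinarith : (4 * ((m:ℝ) - 1)) ≠ 0)]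
        ring
      linarith [hsep, h3, h4 ▸ hsep]
  -- Step 3: the blocks cover all m grid points
  have hcov : m ≤ ∑ j ∈ Finset.range J, c j := by
    have hinj : Set.InjOn (gridCtx m) ↑(Finset.Ico 1 (m+1)) := by
      intro s hs t ht h
      simp only [Finset.coe_Ico, Set.mem_Ico] at hs ht
      have hs' : (s-1) % m = s - 1 := Nat.mod_eq_of_lt (by omega)
      have ht' : (t-1) % m = t - 1 := Nat.mod_eq_of_lt (by omega)
      unfold gridCtx at h
      rw [hs', ht'] at h
      have hne : (2 * ((m:ℝ) - 1)) ≠ 0 := ne_of_gt hden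
      have h2 : s - 1 = t - 1 := by
        rw [add_right_inj, div_left_inj' hne] at h
        exact_mod_cast h
      omega
    have hcard1 : ((Finset.Ico 1 (m+1)).image (gridCtx m)).card = m := by
      rw [Finset.card_image_of_injOn hinj, Nat.card_Ico]
      omega
    have hsub : (Finset.Ico 1 (m+1)).image (gridCtx m) ⊆
        (Finset.range J).biUnion (fun j => (Finset.Ico (τ j) (τ (j+1))).image (gridCtx m)) := by
      intro x hx
      simp only [Finset.mem_image, Finset.mem_Ico] at hx
      obtain ⟨t, ht, rfl⟩ := hx
      obtain ⟨j, hj, h1, h2⟩ := partition_cover_aux J τ t (by omega) (by omega)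
      simp only [Finset.mem_biUnion, Finset.mem_range, Finset.mem_image, Finset.mem_Ico]
      exact ⟨j, hj, t, ⟨h1, h2⟩, rfl⟩
    calc m = ((Finset.Ico 1 (m+1)).image (gridCtx m)).card := hcard1.symm
      _ ≤ ((Finset.range J).biUnion
            (fun j => (Finset.Ico (τ j) (τ (j+1))).image (gridCtx m))).card :=
          Finset.card_le_card hsub
      _ ≤ ∑ j ∈ Finset.range J, c j := Finset.card_biUnion_le
  -- Combine
  have hstep : (3/4 : ℝ) * m ≤ ∑ j ∈ Finset.range J, (3/4 : ℝ) * c j := by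
    rw [← Finset.mul_sum]
    apply mul_le_mul_of_nonneg_left _ (by norm_num)
    exact_mod_cast hcov
  refine hstep.trans (Finset.sum_le_sum ?_)
  intro j hj
  rw [Finset.mem_range] at hj
  have hB' := hB j hj
  have hK' : ((c j : ℕ) : ℝ) ≤ (K j : ℝ) := by exact_mod_cast hKc j hj
  calc (3/4 : ℝ) * c j ≤ (3/4 : ℝ) * K j := by linarith
    _ ≤ B j * K j := mul_le_mul_of_nonneg_right hB' (Nat.cast_nonneg _)
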